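/- Gentle measurement lemma: let ρ be a density operator and X an operator with 0 ≤ X ≤ I on a finite-dimensional Hilbert space, and suppose Tr[ρX] ≥ 1 − ε for some ε ≥ 0. Then ‖ρ − (√X ρ √X)/Tr[ρX]‖₁ ≤ 2√ε. -/

import Mathlib

open Matrix BigOperators
open scoped ComplexOrder

/-- The positive semidefinite square root of a positive semidefinite matrix
(removed from Mathlib; reinstated with its December 2024 definition). -/
noncomputable def Matrix.PosSemidef.sqrt {n : Type*} [Fintype n] [DecidableEq n]
    {𝕜 : Type*} [RCLike 𝕜] {A : Matrix n n 𝕜} (hA : A.PosSemidef) : Matrix n n 𝕜 :=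
  hA.1.eigenvectorUnitary.1 * diagonal ((↑) ∘ (√·) ∘ hA.1.eigenvalues) *
  (star hA.1.eigenvectorUnitary : Matrix n n 𝕜)

/-- The trace norm `‖A‖₁ = Tr √(A† A)` of a square complex matrix. -/
noncomputable def traceNorm {ι : Type*} [Fintype ι] [DecidableEq ι]
    (A : Matrix ι ι ℂ) : ℝ :=
  ((Matrix.posSemidef_conjTranspose_mul_self A).sqrt.trace).re

/-!
Write `ρ = ψψᴴ` with `ψ = √ρ` and `√X ρ √X / t = BBᴴ` with `B = √X ψ / √t`, where `t = Tr[ρX]`.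
For any `A`, `B`, the trace norm of the Hermitian matrix `AAᴴ - BBᴴ` is `Re Tr[S (A - B)(A + B)ᴴ]`,
with `S` its sign, so Cauchy–Schwarz for the Hilbert–Schmidt inner product bounds it by
`‖A - B‖₂ ‖A + B‖₂ = √((‖A‖₂² + ‖B‖₂²)² - 4 (Re Tr[ABᴴ])²)`. Here `‖ψ‖₂ = ‖B‖₂ = 1` and
`Re Tr[ψBᴴ] = Tr[ρ√X] / √t ≥ √t` because `√X ≥ X`, which leaves `2√(1 - t) ≤ 2√ε`.
-/

namespace Matrix

open scoped MatrixOrder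

variable {n : Type*} [Fintype n]

theorem re_trace_mul_conjTranspose_comm (A B : Matrix n n ℂ) :
    (B * Aᴴ).trace.re = (A * Bᴴ).trace.re := by
  rw [← conjTranspose_conjTranspose B, ← conjTranspose_mul, trace_conjTranspose,
    conjTranspose_conjTranspose, Complex.star_def, Complex.conj_re]

theorem re_trace_mul_sub_mul_conjTranspose_add {S : Matrix n n ℂ} (hS : IsSelfAdjoint S)
    (A B : Matrix n n ℂ) :
    (S * (A - B) * (A + B)ᴴ).trace.re = (S * (A * Aᴴ - B * Bᴴ)).trace.re := by
  have hcross : (S * B * Aᴴ).trace.re = (S * A * Bᴴ).trace.re := by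
    have hSA : B * (S * A)ᴴ = B * Aᴴ * S := by
      rw [conjTranspose_mul, ← star_eq_conjTranspose S, hS.star_eq, Matrix.mul_assoc]
    rw [Matrix.mul_assoc, trace_mul_comm, ← hSA, re_trace_mul_conjTranspose_comm,
      Matrix.mul_assoc]
  simp only [conjTranspose_add, Matrix.mul_sub, Matrix.sub_mul, Matrix.mul_add,
    trace_sub, trace_add, Complex.sub_re, Complex.add_re, Matrix.mul_assoc] at hcross ⊢
  linarith

theorem re_trace_sub_mul_conjTranspose_sub (A B : Matrix n n ℂ) :
    ((A - B) * (A - B)ᴴ).trace.re =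
      (A * Aᴴ).trace.re + (B * Bᴴ).trace.re - 2 * (A * Bᴴ).trace.re := by
  simp only [conjTranspose_sub, Matrix.mul_sub, Matrix.sub_mul, trace_sub, Complex.sub_re,
    re_trace_mul_conjTranspose_comm A B]
  ring

theorem re_trace_add_mul_conjTranspose_add (A B : Matrix n n ℂ) :
    ((A + B) * (A + B)ᴴ).trace.re =
      (A * Aᴴ).trace.re + (B * Bᴴ).trace.re + 2 * (A * Bᴴ).trace.re := by
  simp only [conjTranspose_add, Matrix.mul_add, Matrix.add_mul, trace_add, Complex.add_re,
    re_trace_mul_conjTranspose_comm A B]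
  ring

variable [DecidableEq n]

theorem re_trace_mul_conjTranspose_le (C D : Matrix n n ℂ) :
    (C * Dᴴ).trace.re ≤ √(C * Cᴴ).trace.re * √(D * Dᴴ).trace.re := by
  let _ := (1 : Matrix n n ℂ).toMatrixSeminormedAddCommGroup PosSemidef.one
  let _ := (1 : Matrix n n ℂ).toMatrixInnerProductSpace PosSemidef.one
  have h := re_inner_le_norm (𝕜 := ℂ) D C
  rw [norm_eq_sqrt_re_inner (𝕜 := ℂ), norm_eq_sqrt_re_inner (𝕜 := ℂ) C, mul_comm] at h
  change (C * 1 * Dᴴ).trace.re ≤ √(C * 1 * Cᴴ).trace.re * √(D * 1 * Dᴴ).trace.re at h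
  simpa only [Matrix.mul_one] using h

section RCLike

variable {𝕜 : Type*} [RCLike 𝕜]

theorem PosSemidef.sqrt_eq_cfcSqrt {A : Matrix n n 𝕜} (hA : A.PosSemidef) :
    hA.sqrt = CFC.sqrt A := by
  rw [CFC.sqrt_eq_real_sqrt A (nonneg_iff_posSemidef.mpr hA),
    cfcₙ_eq_cfc (hf := Real.continuous_sqrt.continuousOn) (hf0 := Real.sqrt_zero), hA.1.cfc_eq]
  simp only [IsHermitian.cfc, Unitary.conjStarAlgAut_apply]
  rfl

theorem PosSemidef.isHermitian_sqrt {A : Matrix n n 𝕜} (hA : A.PosSemidef) :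
    hA.sqrt.IsHermitian := by
  rw [hA.sqrt_eq_cfcSqrt]
  exact (nonneg_iff_posSemidef.mp (CFC.sqrt_nonneg A)).1

theorem PosSemidef.sqrt_mul_self {A : Matrix n n 𝕜} (hA : A.PosSemidef) :
    hA.sqrt * hA.sqrt = A := by
  rw [hA.sqrt_eq_cfcSqrt]
  exact CFC.sqrt_mul_sqrt_self A (nonneg_iff_posSemidef.mpr hA)

theorem PosSemidef.posSemidef_sqrt_sub_self {A : Matrix n n 𝕜} (hA : A.PosSemidef)
    (hA1 : (1 - A).PosSemidef) : (hA.sqrt - A).PosSemidef := by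
  have hA0 : 0 ≤ A := nonneg_iff_posSemidef.mpr hA
  have hspec_le_one : ∀ x ∈ spectrum ℝ A, x ≤ 1 := by
    rw [← le_algebraMap_iff_spectrum_le (ha := hA.1), map_one, ← sub_nonneg]
    exact nonneg_iff_posSemidef.mpr hA1
  rw [← nonneg_iff_posSemidef, hA.sqrt_eq_cfcSqrt, CFC.sqrt_eq_real_sqrt A hA0,
    cfcₙ_eq_cfc (hf := Real.continuous_sqrt.continuousOn) (hf0 := Real.sqrt_zero)]
  nth_rw 2 [← cfc_id' ℝ A]
  rw [← cfc_sub _ _ A]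
  refine cfc_nonneg fun x hx => ?_
  have hx0 : 0 ≤ x := spectrum_nonneg_of_nonneg hA0 hx
  have hx1 := hspec_le_one x hx
  rw [sub_nonneg, Real.le_sqrt hx0 hx0]
  nlinarith

theorem PosSemidef.trace_mul_nonneg {A B : Matrix n n 𝕜} (hA : A.PosSemidef)
    (hB : B.PosSemidef) : 0 ≤ (A * B).trace := by
  obtain ⟨C, rfl⟩ := CStarAlgebra.nonneg_iff_eq_star_mul_self.mp (nonneg_iff_posSemidef.mpr hA)
  rw [star_eq_conjTranspose, Matrix.mul_assoc, trace_mul_comm]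
  exact (hB.mul_mul_conjTranspose_same C).trace_nonneg

end RCLike

theorem PosSemidef.re_trace_mul_le_re_trace_mul_sqrt {ρ X : Matrix n n ℂ} (hρ : ρ.PosSemidef)
    (hX : X.PosSemidef) (hX1 : (1 - X).PosSemidef) :
    (ρ * X).trace.re ≤ (ρ * hX.sqrt).trace.re := by
  have h := (Complex.nonneg_iff.mp (hρ.trace_mul_nonneg (hX.posSemidef_sqrt_sub_self hX1))).1
  rw [Matrix.mul_sub, trace_sub, Complex.sub_re] at h
  linarith

theorem traceNorm_eq_re_trace_cfcAbs (A : Matrix n n ℂ) :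
    traceNorm A = (CFC.abs A).trace.re := by
  rw [traceNorm, PosSemidef.sqrt_eq_cfcSqrt, CFC.abs, star_eq_conjTranspose]

theorem exists_traceNorm_eq_re_trace_mul {H : Matrix n n ℂ} (hH : IsSelfAdjoint H) :
    ∃ S : Matrix n n ℂ, IsSelfAdjoint S ∧ S * S = 1 ∧ traceNorm H = (S * H).trace.re := by
  have hcont (f : ℝ → ℝ) : ContinuousOn f (spectrum ℝ H) := H.finite_real_spectrum.continuousOn f
  set sign : ℝ → ℝ := fun x => if 0 ≤ x then 1 else -1
  have habs : cfc sign H * H = CFC.abs H := by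
    rw [CFC.abs_eq_cfc_norm H hH]
    nth_rw 2 [← cfc_id' ℝ H hH]
    rw [← cfc_mul _ _ H (hcont _) (hcont _)]
    exact cfc_congr fun x _ => by
      simp only [sign, Real.norm_eq_abs]; split_ifs with h
      · simp [abs_of_nonneg h]
      · simp [abs_of_neg (not_le.mp h)]
  refine ⟨cfc sign H, cfc_predicate sign H, ?_, by rw [habs, traceNorm_eq_re_trace_cfcAbs]⟩
  rw [← cfc_mul sign sign H (hcont _) (hcont _), ← cfc_one ℝ H]
  exact cfc_congr fun x _ => by simp only [sign, Pi.one_apply]; split_ifs <;> norm_num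

theorem traceNorm_mul_conjTranspose_sub_le (A B : Matrix n n ℂ) :
    traceNorm (A * Aᴴ - B * Bᴴ) ≤
      √((A - B) * (A - B)ᴴ).trace.re * √((A + B) * (A + B)ᴴ).trace.re := by
  have hH : IsSelfAdjoint (A * Aᴴ - B * Bᴴ) :=
    (isHermitian_mul_conjTranspose_self A).sub (isHermitian_mul_conjTranspose_self B)
  obtain ⟨S, hS, hSS, hnorm⟩ := exists_traceNorm_eq_re_trace_mul hH
  have hSC : (S * (A - B) * (S * (A - B))ᴴ).trace.re = ((A - B) * (A - B)ᴴ).trace.re := by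
    rw [conjTranspose_mul, ← star_eq_conjTranspose S, hS.star_eq, Matrix.mul_assoc,
      trace_mul_comm, Matrix.mul_assoc, Matrix.mul_assoc, hSS, Matrix.mul_one]
  rw [hnorm, ← re_trace_mul_sub_mul_conjTranspose_add hS, ← hSC]
  exact re_trace_mul_conjTranspose_le _ _

end Matrix

theorem Real.sqrt_mul_sqrt_le_two_sqrt_of_le {t p ε : ℝ} (ht : 0 ≤ t) (htp : t ≤ p)
    (hε : 1 - ε ≤ t) :
    √(1 + t⁻¹ * t - 2 * ((√t)⁻¹ * p)) * √(1 + t⁻¹ * t + 2 * ((√t)⁻¹ * p)) ≤ 2 * √ε := by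
  have hp : 0 ≤ p := ht.trans htp
  have hfour : 2 * √ε = √(4 * ε) := by
    rw [Real.sqrt_mul zero_le_four, show (4 : ℝ) = 2 ^ 2 by norm_num, Real.sqrt_sq zero_le_two]
  rw [← Real.sqrt_mul' _ (by positivity), hfour]
  apply Real.sqrt_le_sqrt
  rcases ht.eq_or_lt with rfl | ht0
  · simp only [Real.sqrt_zero, _root_.inv_zero, zero_mul, mul_zero, add_zero, sub_zero] at hε ⊢
    linarith
  · have hc : t ≤ ((√t)⁻¹ * p) ^ 2 := by
      rw [mul_pow, inv_pow, Real.sq_sqrt ht, le_inv_mul_iff₀ ht0]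
      nlinarith
    rw [inv_mul_cancel₀ ht0.ne']
    nlinarith

theorem gentle_measurement_general {n : ℕ} (ρ X : Matrix (Fin n) (Fin n) ℂ) (ε : ℝ)
    (hρ : ρ.PosSemidef) (hρtr : ρ.trace = 1)
    (hX : X.PosSemidef) (hXle : (1 - X).PosSemidef)
    (h : 1 - ε ≤ ((ρ * X).trace).re) :
    traceNorm (ρ - ((ρ * X).trace)⁻¹ • (hX.sqrt * ρ * hX.sqrt)) ≤
      2 * Real.sqrt ε := by
  set t := (ρ * X).trace.re
  set ψ := hρ.sqrt
  set P := hX.sqrt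
  have hψψ : ψ * ψᴴ = ρ := by rw [hρ.isHermitian_sqrt.eq, hρ.sqrt_mul_self]
  have hP : Pᴴ = P := hX.isHermitian_sqrt
  have ht : 0 ≤ t := (Complex.nonneg_iff.mp (hρ.trace_mul_nonneg hX)).1
  have htX : (ρ * X).trace = t := Complex.eq_re_of_ofReal_le (hρ.trace_mul_nonneg hX)
  -- at `t = 0` both `B` and the subtracted term of the statement are `0`
  set B := (√t)⁻¹ • (P * ψ)
  have hBB : B * Bᴴ = (ρ * X).trace⁻¹ • (P * ρ * P) := by
    rw [conjTranspose_smul, star_trivial, smul_mul_smul_comm, ← sq, inv_pow, Real.sq_sqrt ht,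
      htX, ← Complex.ofReal_inv, Complex.coe_smul, conjTranspose_mul, hP, Matrix.mul_assoc,
      ← Matrix.mul_assoc ψ, hψψ, Matrix.mul_assoc]
  have hBBre : (B * Bᴴ).trace.re = t⁻¹ * t := by
    rw [hBB, trace_smul, trace_mul_comm (P * ρ), ← Matrix.mul_assoc, hX.sqrt_mul_self,
      trace_mul_comm X, htX, smul_eq_mul, ← Complex.ofReal_inv, ← Complex.ofReal_mul, Complex.ofReal_re]
  have hψB : (ψ * Bᴴ).trace.re = (√t)⁻¹ * (ρ * P).trace.re := by
    rw [conjTranspose_smul, star_trivial, Matrix.mul_smul, trace_smul, Complex.smul_re,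
      smul_eq_mul, conjTranspose_mul, hP, ← Matrix.mul_assoc, hψψ]
  calc traceNorm (ρ - (ρ * X).trace⁻¹ • (P * ρ * P))
      = traceNorm (ψ * ψᴴ - B * Bᴴ) := by rw [hψψ, hBB]
    _ ≤ √((ψ - B) * (ψ - B)ᴴ).trace.re * √((ψ + B) * (ψ + B)ᴴ).trace.re :=
        traceNorm_mul_conjTranspose_sub_le ψ B
    _ = √(1 + t⁻¹ * t - 2 * ((√t)⁻¹ * (ρ * P).trace.re)) *
          √(1 + t⁻¹ * t + 2 * ((√t)⁻¹ * (ρ * P).trace.re)) := by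
        rw [re_trace_sub_mul_conjTranspose_sub, re_trace_add_mul_conjTranspose_add, hψψ, hρtr,
          Complex.one_re, hBBre, hψB]
    _ ≤ 2 * √ε := Real.sqrt_mul_sqrt_le_two_sqrt_of_le ht
        (hρ.re_trace_mul_le_re_trace_mul_sqrt hX hXle) h

/-- Gentle measurement lemma: if `ρ` is a density operator, `0 ≤ X ≤ I` and
`Tr[ρX] ≥ 1 − ε`, then `‖ρ − √X ρ √X / Tr[ρX]‖₁ ≤ 2√ε`. -/
theorem gentle_measurement {n : ℕ} (ρ X : Matrix (Fin n) (Fin n) ℂ) (ε : ℝ)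
    (hε : 0 ≤ ε) (hρ : ρ.PosSemidef) (hρtr : ρ.trace = 1)
    (hX : X.PosSemidef) (hXle : (1 - X).PosSemidef)
    (h : 1 - ε ≤ ((ρ * X).trace).re) :
    traceNorm (ρ - ((ρ * X).trace)⁻¹ • (hX.sqrt * ρ * hX.sqrt)) ≤
      2 * Real.sqrt ε :=
  gentle_measurement_general ρ X ε hρ hρtr hX hXle h
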